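/- arXiv:2303.12277 — 4 statements merged into one kernel-verified Lean document; each statement's English description precedes it below -/
import Mathlib

section
/- For any non-decreasing sequence of positive reals $y_1 \le y_2 \le \cdots$ and any positive integer $T$, we have $\max_{t \in [T]} \sum_{s=1}^{t} y_s / y_{t+1} \ge T / \big( (y_{T+1}/y_1)^{1/T} (1 + \log(y_{T+1}/y_1)) \big)$. -/
/-!
Write `q_t = y_t / y_{t+1} ∈ (0, 1]` and `a_t = ∑_{s ≤ t} y_s / y_{t+1}`, so that
`a_{t+1} = q_{t+1} (1 + a_t)`. If `M` bounds every `a_t`, then `1 - q ≤ -log q` gives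
`(1 - q_{t+1}) a_t ≤ M log (y_{t+2} / y_{t+1})`, and summing these increments yields
`∑_{t ≤ T} q_t ≤ M log (y_{T+1} / y_1) + a_T ≤ M (1 + log (y_{T+1} / y_1))`.
On the other hand the `q_t` telescope to `y_1 / y_{T+1}`, so by AM-GM their sum is at least
`T (y_1 / y_{T+1})^{1/T}`.
-/

open Finset Real

theorem card_mul_prod_rpow_inv_card_le_sum {ι : Type*} (s : Finset ι) {z : ι → ℝ}
    (hz : ∀ i ∈ s, 0 ≤ z i) :
    (#s : ℝ) * (∏ i ∈ s, z i) ^ (#s : ℝ)⁻¹ ≤ ∑ i ∈ s, z i := by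
  rcases s.eq_empty_or_nonempty with rfl | hs
  · simp
  have hcard : (0 : ℝ) < #s := by exact_mod_cast hs.card_pos
  have amgm := geom_mean_le_arith_mean s (fun _ ↦ 1) z (fun _ _ ↦ zero_le_one)
    (by simpa using hcard) hz
  simp only [rpow_one, sum_const, nsmul_eq_mul, mul_one, one_mul] at amgm
  rwa [le_div_iff₀ hcard, mul_comm] at amgm

theorem one_sub_div_mul_le_mul_log_sub_log {u v a M : ℝ} (hu : 0 < u) (huv : u ≤ v)
    (ha : 0 ≤ a) (haM : a ≤ M) : (1 - u / v) * a ≤ M * (log v - log u) := by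
  have hv : 0 < v := hu.trans_le huv
  have hlog : 1 - u / v ≤ log v - log u := by
    simpa [← log_div hv.ne' hu.ne'] using one_sub_inv_le_log_of_pos (div_pos hv hu)
  calc (1 - u / v) * a ≤ (1 - u / v) * M :=
        mul_le_mul_of_nonneg_left haM (by rw [sub_nonneg]; exact div_le_one_of_le₀ huv hv.le)
    _ ≤ (log v - log u) * M := mul_le_mul_of_nonneg_right hlog (ha.trans haM)
    _ = M * (log v - log u) := mul_comm _ _

section

variable {y : ℕ → ℝ}

theorem prod_Icc_div_succ (hy : ∀ t, 1 ≤ t → y t ≠ 0) (T : ℕ) :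
    ∏ t ∈ Icc 1 T, y t / y (t + 1) = y 1 / y (T + 1) := by
  induction T with
  | zero => simp [div_self (hy 1 le_rfl)]
  | succ n ih => rw [prod_Icc_succ_top (by omega), ih, div_mul_div_cancel₀ (hy (n + 1) (by omega))]

theorem natCast_mul_rpow_le_sum_div_succ (hpos : ∀ t, 1 ≤ t → 0 < y t) (T : ℕ) :
    (T : ℝ) * (y 1 / y (T + 1)) ^ ((1 : ℝ) / T) ≤ ∑ t ∈ Icc 1 T, y t / y (t + 1) := by
  have h := card_mul_prod_rpow_inv_card_le_sum (Icc 1 T) (z := fun t ↦ y t / y (t + 1))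
    fun t ht ↦ (div_pos (hpos t (mem_Icc.mp ht).1) (hpos (t + 1) (by omega))).le
  rwa [prod_Icc_div_succ (fun t ht ↦ (hpos t ht).ne'), Nat.card_Icc, Nat.add_sub_cancel,
    ← one_div] at h

noncomputable def normalizedPrefixSum (y : ℕ → ℝ) (t : ℕ) : ℝ := ∑ s ∈ Icc 1 t, y s / y (t + 1)

@[simp]
theorem normalizedPrefixSum_zero : normalizedPrefixSum y 0 = 0 := by
  simp [normalizedPrefixSum]

theorem normalizedPrefixSum_nonneg (hpos : ∀ t, 1 ≤ t → 0 < y t) (t : ℕ) :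
    0 ≤ normalizedPrefixSum y t :=
  sum_nonneg fun s hs ↦ (div_pos (hpos s (mem_Icc.mp hs).1) (hpos (t + 1) (by omega))).le

theorem normalizedPrefixSum_succ {n : ℕ} (hy : y (n + 1) ≠ 0) :
    normalizedPrefixSum y (n + 1) = y (n + 1) / y (n + 2) * (1 + normalizedPrefixSum y n) := by
  rw [normalizedPrefixSum, normalizedPrefixSum, sum_Icc_succ_top (by omega), mul_add, mul_one,
    mul_sum, add_comm]
  congr 1
  refine sum_congr rfl fun s _ ↦ ?_
  rw [div_mul_div_comm, mul_comm (y (n + 1)), mul_div_mul_right _ _ hy]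

theorem sum_div_succ_le_mul_log_add_normalizedPrefixSum (hpos : ∀ t, 1 ≤ t → 0 < y t)
    (hmono : ∀ t, 1 ≤ t → y t ≤ y (t + 1)) {n : ℕ} {M : ℝ}
    (hM : ∀ t ≤ n, normalizedPrefixSum y t ≤ M) :
    ∑ t ∈ Icc 1 n, y t / y (t + 1) ≤
      M * (log (y (n + 1)) - log (y 1)) + normalizedPrefixSum y n := by
  induction n with
  | zero => simp
  | succ n ih =>
    have hstep := one_sub_div_mul_le_mul_log_sub_log (hpos (n + 1) (by omega))
      (hmono (n + 1) (by omega)) (normalizedPrefixSum_nonneg hpos n) (hM n (by omega))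
    rw [sum_Icc_succ_top (by omega), normalizedPrefixSum_succ (hpos (n + 1) (by omega)).ne']
    linarith [ih fun t ht ↦ hM t (by omega)]

end

/-- For any non-decreasing sequence of positive reals and any positive integer `T`,
`max_{t ∈ [T]} ∑_{s=1}^t y_s / y_{t+1} ≥ T / ((y_{T+1}/y_1)^{1/T} (1 + log(y_{T+1}/y_1)))`. -/
theorem dog_sequence_lower_bound (y : ℕ → ℝ)
    (hpos : ∀ t, 1 ≤ t → 0 < y t)
    (hmono : ∀ t, 1 ≤ t → y t ≤ y (t + 1))
    (T : ℕ) (hT : 1 ≤ T) :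
    ∃ t ∈ Finset.Icc 1 T,
      (T : ℝ) / ((y (T + 1) / y 1) ^ ((1 : ℝ) / T) * (1 + Real.log (y (T + 1) / y 1)))
        ≤ ∑ s ∈ Finset.Icc 1 t, y s / y (t + 1) := by
  obtain ⟨t, ht, hmax⟩ := exists_max_image (Icc 1 T) (normalizedPrefixSum y)
    ⟨1, mem_Icc.mpr ⟨le_rfl, hT⟩⟩
  set M := normalizedPrefixSum y t
  have hM : ∀ s ≤ T, normalizedPrefixSum y s ≤ M := fun s hs ↦ by
    rcases s.eq_zero_or_pos with rfl | hs0
    · simpa using normalizedPrefixSum_nonneg hpos t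
    · exact hmax s (mem_Icc.mpr ⟨hs0, hs⟩)
  have hy1 := hpos 1 le_rfl
  have hyT := hpos (T + 1) (by omega)
  have hlog : log (y (T + 1) / y 1) = log (y (T + 1)) - log (y 1) := log_div hyT.ne' hy1.ne'
  have hlog_nonneg : 0 ≤ log (y (T + 1) / y 1) :=
    log_nonneg ((one_le_div hy1).mpr <|
      monotone_nat_of_le_succ (f := fun n ↦ y (n + 1)) (fun n ↦ hmono (n + 1) (by omega))
        (Nat.zero_le T))
  have hupper := sum_div_succ_le_mul_log_add_normalizedPrefixSum hpos hmono hM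
  have hlower := natCast_mul_rpow_le_sum_div_succ hpos T
  rw [← inv_div, inv_rpow (div_pos hyT hy1).le] at hlower
  refine ⟨t, ht, ?_⟩
  calc (T : ℝ) / ((y (T + 1) / y 1) ^ ((1 : ℝ) / T) * (1 + log (y (T + 1) / y 1)))
      = T * ((y (T + 1) / y 1) ^ ((1 : ℝ) / T))⁻¹ / (1 + log (y (T + 1) / y 1)) := by
        rw [div_mul_eq_div_div, div_eq_mul_inv (T : ℝ)]
    _ ≤ M := by
        rw [div_le_iff₀ (by linarith), hlog]
        linarith [hM T le_rfl]
end

section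
/- Let $X$ be a random vector in $\mathbb{R}^d$ with $\mathbb{E}[X] = g$, $\|g\| \le G$, and $\mathbb{E}[\|X - g\|^p] \le \sigma^p$ for some $p \in (1,2]$. For $M \ge 2G$, define the clipped vector $Y = \min\{1, M/\|X\|\} X$. Then $\|\mathbb{E}[Y] - g\| \le 2\sigma^p M^{1-p}$. -/
open MeasureTheory Real

/-- Bias of the clipped estimator: if `E[X] = g`, `‖g‖ ≤ G`, `E[‖X - g‖^p] ≤ σ^p` with
`p ∈ (1,2]`, and `M ≥ 2G`, then the clipping `Y = min{1, M/‖X‖} X` satisfies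
`‖E[Y] - g‖ ≤ 2 σ^p M^{1-p}`. -/
theorem clipped_bias_bound {d : ℕ} {Ω : Type*} [MeasurableSpace Ω]
    (μ : Measure Ω) [IsProbabilityMeasure μ]
    (X : Ω → EuclideanSpace ℝ (Fin d)) (g : EuclideanSpace ℝ (Fin d))
    (G σ M p : ℝ) (hp : 1 < p) (hp2 : p ≤ 2) (hσ : 0 ≤ σ) (hG : 0 < G)
    (hM : 2 * G ≤ M)
    (hmeas : Measurable X) (hint : Integrable X μ)
    (hmean : ∫ ω, X ω ∂μ = g) (hgG : ‖g‖ ≤ G)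
    (hintp : Integrable (fun ω => ‖X ω - g‖ ^ p) μ)
    (hmom : ∫ ω, ‖X ω - g‖ ^ p ∂μ ≤ σ ^ p) :
    ‖(∫ ω, (min 1 (M / ‖X ω‖)) • X ω ∂μ) - g‖ ≤ 2 * σ ^ p * M ^ (1 - p) := by
  have hM0 : 0 < M := lt_of_lt_of_le (by linarith) hM
  set C : ℝ := (M / 2) ^ (1 - p) with hC
  have hC0 : 0 ≤ C := rpow_nonneg (by positivity) _
  set Y : Ω → EuclideanSpace ℝ (Fin d) := fun ω => (min 1 (M / ‖X ω‖)) • X ω with hYdef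
  have hmeasY : Measurable Y :=
    (measurable_const.min (measurable_const.div hmeas.norm)).smul hmeas
  have hYle : ∀ ω, ‖Y ω‖ ≤ ‖X ω‖ := by
    intro ω
    have h0 : 0 ≤ min 1 (M / ‖X ω‖) := le_min zero_le_one (by positivity)
    have h1 : min 1 (M / ‖X ω‖) ≤ 1 := min_le_left _ _
    calc ‖Y ω‖ = |min 1 (M / ‖X ω‖)| * ‖X ω‖ := norm_smul _ _
    _ ≤ 1 * ‖X ω‖ := by
        apply mul_le_mul_of_nonneg_right _ (norm_nonneg _)
        rwa [abs_of_nonneg h0]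
    _ = ‖X ω‖ := one_mul _
  have hintY : Integrable Y μ :=
    hint.norm.mono' hmeasY.aestronglyMeasurable (ae_of_all _ hYle)
  have hbound : ∀ ω, ‖Y ω - X ω‖ ≤ C * ‖X ω - g‖ ^ p := by
    intro ω
    rcases le_or_gt ‖X ω‖ M with h | h
    · have hz : Y ω - X ω = 0 := by
        rcases eq_or_lt_of_le (norm_nonneg (X ω)) with h0 | h0
        · have : X ω = 0 := by simpa using (norm_eq_zero.mp h0.symm)
          simp [hYdef, this]
        · have : min 1 (M / ‖X ω‖) = 1 := min_eq_left ((one_le_div h0).mpr h)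
          simp [hYdef, this]
      rw [hz, norm_zero]
      positivity
    · have hn0 : 0 < ‖X ω‖ := lt_trans hM0 h
      have hmin : min 1 (M / ‖X ω‖) = M / ‖X ω‖ :=
        min_eq_right (le_of_lt ((div_lt_one hn0).mpr h))
      have hnorm : ‖Y ω - X ω‖ = ‖X ω‖ - M := by
        have heq : Y ω - X ω = (M / ‖X ω‖ - 1) • X ω := by
          rw [hYdef]; simp only [hmin, sub_smul, one_smul]
        have hle : M / ‖X ω‖ - 1 ≤ 0 := by
          have := (div_lt_one hn0).mpr h; linarith
        rw [heq, norm_smul, Real.norm_eq_abs, abs_of_nonpos hle, neg_sub, sub_mul,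
          one_mul, div_mul_cancel₀ _ (ne_of_gt hn0)]
      set t := ‖X ω - g‖ with ht
      have ht1 : ‖X ω‖ - ‖g‖ ≤ t := by
        have := norm_sub_norm_le (X ω) g; linarith
      have ht2 : M / 2 ≤ t := by linarith
      have ht0 : 0 < t := lt_of_lt_of_le (by linarith) ht2
      have key : t ≤ C * t ^ p := by
        have h1 : t ^ (1 - p) ≤ C := by
          exact rpow_le_rpow_of_nonpos (by linarith) ht2 (by linarith)
        calc t = t ^ (1 - p) * t ^ p := by
              rw [← rpow_add ht0]; norm_num
        _ ≤ C * t ^ p := mul_le_mul_of_nonneg_right h1 (rpow_nonneg ht0.le _)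
      have hXM : ‖X ω‖ - M ≤ t := by linarith
      rw [hnorm]; exact le_trans hXM key
  have hsub : (∫ ω, Y ω ∂μ) - g = ∫ ω, (Y ω - X ω) ∂μ := by
    rw [integral_sub hintY hint, hmean]
  calc ‖(∫ ω, Y ω ∂μ) - g‖ = ‖∫ ω, (Y ω - X ω) ∂μ‖ := by rw [hsub]
  _ ≤ ∫ ω, ‖Y ω - X ω‖ ∂μ := norm_integral_le_integral_norm _
  _ ≤ ∫ ω, C * ‖X ω - g‖ ^ p ∂μ := by
      exact integral_mono ((hintY.sub hint).norm) (hintp.const_mul C) hbound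
  _ = C * ∫ ω, ‖X ω - g‖ ^ p ∂μ := integral_const_mul _ _
  _ ≤ C * σ ^ p := by
      apply mul_le_mul_of_nonneg_left hmom hC0
  _ ≤ 2 * σ ^ p * M ^ (1 - p) := by
      have h2 : C = 2 ^ (p - 1) * M ^ (1 - p) := by
        have e : (2:ℝ) ^ (p - 1) = ((2:ℝ) ^ (1 - p))⁻¹ := by
          rw [← rpow_neg (by norm_num : (0:ℝ) ≤ 2)]; ring_nf
        rw [hC, div_rpow hM0.le (by norm_num), e, div_eq_mul_inv, mul_comm]
      have h3 : (2:ℝ) ^ (p - 1) ≤ 2 := by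
        calc (2:ℝ) ^ (p - 1) ≤ 2 ^ (1:ℝ) :=
          rpow_le_rpow_of_exponent_le (by norm_num) (by linarith)
        _ = 2 := rpow_one 2
      have hσp : 0 ≤ σ ^ p := rpow_nonneg hσ _
      have hMp : 0 ≤ M ^ (1 - p) := rpow_nonneg hM0.le _
      calc C * σ ^ p = 2 ^ (p - 1) * M ^ (1 - p) * σ ^ p := by rw [h2]
      _ ≤ 2 * M ^ (1 - p) * σ ^ p := by
          apply mul_le_mul_of_nonneg_right (mul_le_mul_of_nonneg_right h3 hMp) hσp
      _ = 2 * σ ^ p * M ^ (1 - p) := by ring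
end

section
/- Let $X$ be a random vector in $\mathbb{R}^d$ with $\mathbb{E}[X] = g$, $\|g\| \le G$, and $\mathbb{E}[\|X - g\|^p] \le \sigma^p$ for some $p \in (1,2]$. For $M \ge 2G$, define $Y = \min\{1, M/\|X\|\} X$. Then $\mathbb{E}[\|Y - g\|^2] \le 10\, \sigma^p M^{2-p}$. -/
open MeasureTheory

/-- Second moment of the clipped estimator's error: under the heavy-tailed assumptions and
`M ≥ 2G`, the clipping `Y = min{1, M/‖X‖} X` satisfies `E[‖Y - g‖²] ≤ 10 σ^p M^{2-p}`. -/
theorem clipped_second_moment_bound {d : ℕ} {Ω : Type*} [MeasurableSpace Ω]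
    (μ : Measure Ω) [IsProbabilityMeasure μ]
    (X : Ω → EuclideanSpace ℝ (Fin d)) (g : EuclideanSpace ℝ (Fin d))
    (G σ M p : ℝ) (hp : 1 < p) (hp2 : p ≤ 2) (hσ : 0 ≤ σ) (hG : 0 < G)
    (hM : 2 * G ≤ M)
    (hmeas : Measurable X) (hint : Integrable X μ)
    (hmean : ∫ ω, X ω ∂μ = g) (hgG : ‖g‖ ≤ G)
    (hintp : Integrable (fun ω => ‖X ω - g‖ ^ p) μ)
    (hmom : ∫ ω, ‖X ω - g‖ ^ p ∂μ ≤ σ ^ p) :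
    ∫ ω, ‖(min 1 (M / ‖X ω‖)) • X ω - g‖ ^ 2 ∂μ ≤ 10 * σ ^ p * M ^ (2 - p) := by
  have hM0 : 0 < M := by linarith
  have hMp : (0:ℝ) ≤ M ^ (2 - p) := Real.rpow_nonneg hM0.le _
  have key : ∀ ω, ‖(min 1 (M / ‖X ω‖)) • X ω - g‖ ^ 2
      ≤ 9 * M ^ (2 - p) * ‖X ω - g‖ ^ p := by
    intro ω
    set x := X ω with hxdef
    by_cases hcase : ‖x‖ ≤ M
    · have hy : (min 1 (M / ‖x‖)) • x = x := by
        by_cases hx0 : x = 0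
        · simp [hx0]
        · have hxpos : 0 < ‖x‖ := norm_pos_iff.mpr hx0
          rw [min_eq_left ((one_le_div hxpos).mpr hcase), one_smul]
      rw [hy]
      set r := ‖x - g‖ with hrdef
      have hr0 : 0 ≤ r := norm_nonneg _
      have hr32 : r ≤ 3 / 2 * M := by
        have := norm_sub_le x g
        linarith [hgG, hcase]
      rcases eq_or_lt_of_le hr0 with h0 | hrpos
      · rw [← h0]
        rw [Real.zero_rpow (by linarith : p ≠ 0)]
        norm_num
      · have e1 : r ^ 2 = r ^ p * r ^ (2 - p) := by
          rw [← Real.rpow_add hrpos]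
          rw [show p + (2 - p) = 2 by ring, Real.rpow_two, sq]
        have e2 : r ^ (2 - p) ≤ (3 / 2 * M) ^ (2 - p) :=
          Real.rpow_le_rpow hr0 hr32 (by linarith)
        have e3 : (3 / 2 * M) ^ (2 - p) = (3 / 2 : ℝ) ^ (2 - p) * M ^ (2 - p) :=
          Real.mul_rpow (by norm_num) hM0.le
        have e4 : (3 / 2 : ℝ) ^ (2 - p) ≤ 3 / 2 := by
          have := Real.rpow_le_rpow_of_exponent_le (by norm_num : (1:ℝ) ≤ 3 / 2)
            (by linarith : 2 - p ≤ 1)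
          simpa using this
        have hrp : (0:ℝ) ≤ r ^ p := Real.rpow_nonneg hr0 _
        calc r ^ 2 = r ^ p * r ^ (2 - p) := e1
          _ ≤ r ^ p * ((3 / 2 : ℝ) ^ (2 - p) * M ^ (2 - p)) := by
              rw [← e3]; exact mul_le_mul_of_nonneg_left e2 hrp
          _ ≤ 9 * M ^ (2 - p) * r ^ p := by
              have e5 : (3 / 2 : ℝ) ^ (2 - p) * M ^ (2 - p) ≤ 3 / 2 * M ^ (2 - p) :=
                mul_le_mul_of_nonneg_right e4 hMp
              nlinarith [mul_le_mul_of_nonneg_left e5 hrp, mul_nonneg hrp hMp]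
    · push_neg at hcase
      have hxpos : (0:ℝ) < ‖x‖ := lt_trans hM0 hcase
      have hy : min 1 (M / ‖x‖) = M / ‖x‖ :=
        min_eq_right ((div_le_one hxpos).mpr hcase.le)
      have hny : ‖(min 1 (M / ‖x‖)) • x‖ = M := by
        rw [hy, norm_smul, Real.norm_of_nonneg (by positivity), div_mul_cancel₀ _ hxpos.ne']
      have hyg : ‖(min 1 (M / ‖x‖)) • x - g‖ ≤ 3 / 2 * M := by
        have := norm_sub_le ((min 1 (M / ‖x‖)) • x) g
        rw [hny] at this; linarith
      have hrlow : M / 2 ≤ ‖x - g‖ := by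
        have := norm_sub_norm_le x g
        linarith
      have h1 : (M / 2) ^ p ≤ ‖x - g‖ ^ p :=
        Real.rpow_le_rpow (by positivity) hrlow (by linarith)
      have h2 : (M / 2) ^ p = M ^ p / (2:ℝ) ^ p := Real.div_rpow hM0.le (by norm_num : (0:ℝ) ≤ 2) p
      have h3 : (2:ℝ) ^ p ≤ 4 := by
        have := Real.rpow_le_rpow_of_exponent_le (by norm_num : (1:ℝ) ≤ 2) hp2
        rw [show ((2:ℝ) ^ (2:ℝ)) = 4 by rw [Real.rpow_two]; norm_num] at this
        exact this
      have h4 : M ^ p / 4 ≤ (M / 2) ^ p := by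
        rw [h2]
        apply div_le_div_of_nonneg_left (Real.rpow_nonneg hM0.le p) (Real.rpow_pos_of_pos two_pos p) h3
      have h5 : M ^ (2 - p) * M ^ p = M ^ 2 := by
        rw [← Real.rpow_add hM0, show (2 - p) + p = 2 by ring, Real.rpow_two, sq]
      have hMp' : (0:ℝ) < M ^ p := Real.rpow_pos_of_pos hM0 p
      have hnn : 0 ≤ ‖(min 1 (M / ‖x‖)) • x - g‖ := norm_nonneg _
      calc ‖(min 1 (M / ‖x‖)) • x - g‖ ^ 2 ≤ (3 / 2 * M) ^ 2 := by
            apply pow_le_pow_left₀ hnn hyg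
        _ = 9 / 4 * M ^ 2 := by ring
        _ ≤ 9 * M ^ (2 - p) * (M ^ p / 4) := by
            rw [show 9 * M ^ (2-p) * (M ^ p / 4) = 9 / 4 * (M ^ (2-p) * M ^ p) by ring, h5]
        _ ≤ 9 * M ^ (2 - p) * (M / 2) ^ p := by
            apply mul_le_mul_of_nonneg_left h4 (by positivity)
        _ ≤ 9 * M ^ (2 - p) * ‖x - g‖ ^ p := by
            apply mul_le_mul_of_nonneg_left h1 (by positivity)
  have hmeasY : Measurable fun ω => ‖(min 1 (M / ‖X ω‖)) • X ω - g‖ ^ 2 := by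
    apply Measurable.pow_const
    apply Measurable.norm
    apply Measurable.sub_const
    exact ((measurable_const.min (measurable_const.div hmeas.norm)).smul hmeas)
  have h1 : Integrable (fun ω => ‖(min 1 (M / ‖X ω‖)) • X ω - g‖ ^ 2) μ := by
    apply Integrable.mono' (hintp.const_mul (9 * M ^ (2 - p)))
      hmeasY.aestronglyMeasurable
    filter_upwards with ω
    rw [Real.norm_of_nonneg (by positivity)]
    exact key ω
  calc ∫ ω, ‖(min 1 (M / ‖X ω‖)) • X ω - g‖ ^ 2 ∂μ
      ≤ ∫ ω, 9 * M ^ (2 - p) * ‖X ω - g‖ ^ p ∂μ :=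
        integral_mono h1 (hintp.const_mul _) key
    _ = 9 * M ^ (2 - p) * ∫ ω, ‖X ω - g‖ ^ p ∂μ := integral_const_mul _ _
    _ ≤ 9 * M ^ (2 - p) * σ ^ p := by
        apply mul_le_mul_of_nonneg_left hmom (by positivity)
    _ ≤ 10 * σ ^ p * M ^ (2 - p) := by
        nlinarith [Real.rpow_nonneg hσ p, hMp]
end

section
/- Let $\mathcal{X} \subseteq \mathbb{R}^d$ be closed and convex, $F$ convex on $\mathcal{X}$ with $x_* \in \mathcal{X}$, let $x \in \mathcal{X}$, $\partial \in \partial F(x)$ with $\|\partial\| \le G$, let $g \in \mathbb{R}^d$ and $\eta > 0$, and set $x^+ = \Pi_{\mathcal{X}}(x - \eta g)$, $\xi = g - \partial$. If additionally $F(x) \ge F(x_*) + \langle \partial', x - x_* \rangle + \frac{\mu}{2}\|x - x_*\|^2$ holds for subgradients (i.e., $F$ is $\mu$-strongly convex, $\mu \ge 0$), then writing $\xi = \xi^u + \xi^b$ for any decomposition, $F(x) - F(x_*) + \frac{1}{2\eta}\|x^+ - x_*\|^2 - \frac{\eta^{-1} - \mu}{2}\|x - x_*\|^2 \le \langle \xi,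 x_* - x \rangle + \eta\,(2\|\xi^u\|^2 + 2\|\xi^b\|^2 + G^2)$. -/
open scoped RealInnerProductSpace

/-!
The variational inequality of the projection at `x⋆` gives the three-point inequality
`‖x⁺ - x⋆‖² + ‖x - x⁺‖² ≤ ‖x - x⋆‖² + 2η⟪g, x⋆ - x⁺⟫`. Splitting
`⟪g, x⋆ - x⁺⟫ = ⟪g - ∂, x⋆ - x⟫ + ⟪∂, x⋆ - x⟫ + ⟪g, x - x⁺⟫`, the middle term is bounded by strong
convexity, and Young's inequality trades the last one for `η‖g‖²/2` plus the term `‖x - x⁺‖²` won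
above. Finally `‖g‖² = ‖ξᵘ + ξᵇ + ∂‖² ≤ 4‖ξᵘ‖² + 4‖ξᵇ‖² + 2G²`.
-/

section SeminormedAddCommGroup

variable {E : Type*} [SeminormedAddCommGroup E]

theorem norm_add_sq_le_two_mul (a b : E) : ‖a + b‖ ^ 2 ≤ 2 * (‖a‖ ^ 2 + ‖b‖ ^ 2) :=
  (pow_le_pow_left₀ (norm_nonneg _) (norm_add_le a b) 2).trans add_sq_le

theorem norm_add_add_sq_le (a b c : E) :
    ‖a + b + c‖ ^ 2 ≤ 4 * ‖a‖ ^ 2 + 4 * ‖b‖ ^ 2 + 2 * ‖c‖ ^ 2 := by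
  linarith [norm_add_sq_le_two_mul (a + b) c, norm_add_sq_le_two_mul a b]

end SeminormedAddCommGroup

section InnerProductSpace

variable {E : Type*} [NormedAddCommGroup E] [InnerProductSpace ℝ E]

theorem norm_sub_sq_add_norm_sub_sq_le_of_inner_nonneg {x z p g : E} {η : ℝ}
    (hvi : 0 ≤ ⟪p - (x - η • g), z - p⟫) :
    ‖p - z‖ ^ 2 + ‖x - p‖ ^ 2 ≤ ‖x - z‖ ^ 2 + 2 * η * ⟪g, z - p⟫ := by
  have hsplit : ‖x - z‖ ^ 2 = ‖x - p‖ ^ 2 + 2 * ⟪x - p, p - z⟫ + ‖p - z‖ ^ 2 := by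
    rw [← norm_add_sq_real, sub_add_sub_cancel]
  have hvi' : 0 ≤ ⟪x - p, p - z⟫ + η * ⟪g, z - p⟫ := by
    rw [show p - (x - η • g) = η • g - (x - p) by abel, inner_sub_left, real_inner_smul_left]
      at hvi
    linarith [show ⟪x - p, z - p⟫ = -⟪x - p, p - z⟫ by rw [← inner_neg_right, neg_sub]]
  linarith

theorem two_mul_inner_le_sq_norm_add_sq_norm (η : ℝ) (g v : E) :
    2 * η * ⟪g, v⟫ ≤ η ^ 2 * ‖g‖ ^ 2 + ‖v‖ ^ 2 := by
  calc 2 * η * ⟪g, v⟫ = 2 * ⟪η • g, v⟫ := by rw [real_inner_smul_left, mul_assoc]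
    _ ≤ 2 * (‖η • g‖ * ‖v‖) := by gcongr; exact real_inner_le_norm _ _
    _ ≤ ‖η • g‖ ^ 2 + ‖v‖ ^ 2 := by rw [← mul_assoc]; exact two_mul_le_add_sq _ _
    _ = η ^ 2 * ‖g‖ ^ 2 + ‖v‖ ^ 2 := by rw [norm_smul, mul_pow, Real.norm_eq_abs, sq_abs]

end InnerProductSpace

theorem one_step_descent_general {d : ℕ}
    (𝒳 : Set (EuclideanSpace ℝ (Fin d)))
    (F : EuclideanSpace ℝ (Fin d) → ℝ)
    (x xstar xplus sg g ξu ξb : EuclideanSpace ℝ (Fin d))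
    (G μ η : ℝ)
    (hxstar : xstar ∈ 𝒳)
    (hη : 0 < η) (hG : ‖sg‖ ≤ G)
    (hsc : F x + ⟪sg, xstar - x⟫ + μ / 2 * ‖xstar - x‖ ^ 2 ≤ F xstar)
    (hproj : ∀ z ∈ 𝒳, (0 : ℝ) ≤ ⟪xplus - (x - η • g), z - xplus⟫)
    (hdecomp : g - sg = ξu + ξb) :
    F x - F xstar + 1 / (2 * η) * ‖xplus - xstar‖ ^ 2
        - (η⁻¹ - μ) / 2 * ‖x - xstar‖ ^ 2
      ≤ ⟪g - sg, xstar - x⟫ + η * (2 * ‖ξu‖ ^ 2 + 2 * ‖ξb‖ ^ 2 + G ^ 2) := by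
  have hthree := norm_sub_sq_add_norm_sub_sq_le_of_inner_nonneg (hproj xstar hxstar)
  have hyoung := two_mul_inner_le_sq_norm_add_sq_norm η g (x - xplus)
  have hsplit : ⟪g, xstar - xplus⟫ = ⟪g - sg, xstar - x⟫ + ⟪sg, xstar - x⟫ + ⟪g, x - xplus⟫ := by
    simp only [inner_sub_left, inner_sub_right]; ring
  have hg : ‖g‖ ^ 2 ≤ 4 * ‖ξu‖ ^ 2 + 4 * ‖ξb‖ ^ 2 + 2 * G ^ 2 := by
    rw [← sub_add_cancel g sg, hdecomp]
    have := pow_le_pow_left₀ (norm_nonneg sg) hG 2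
    linarith [norm_add_add_sq_le ξu ξb sg]
  rw [norm_sub_rev xstar x] at hsc
  have hkey : ‖xplus - xstar‖ ^ 2 ≤ (1 - η * μ) * ‖x - xstar‖ ^ 2
      + 2 * η * (⟪g - sg, xstar - x⟫ + F xstar - F x) + η ^ 2 * ‖g‖ ^ 2 := by
    linear_combination hthree + hyoung + 2 * η * hsplit + 2 * η * hsc
  linear_combination (norm := skip) (1 / (2 * η)) * hkey + (η / 2) * hg
  field_simp
  exact le_of_eq (by ring)

/-- One-step descent inequality for projected clipped SGD: if `x⁺ = Π_𝒳(x - η g)` (characterized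
by the variational inequality of the Euclidean projection), `∂ ∈ ∂F(x)` with `‖∂‖ ≤ G`,
`F` is `μ`-strongly convex at `x` toward `x⋆`, and `ξ = g - ∂ = ξᵘ + ξᵇ`, then
`F(x) - F(x⋆) + (1/(2η))‖x⁺ - x⋆‖² - ((η⁻¹ - μ)/2)‖x - x⋆‖²
  ≤ ⟨ξ, x⋆ - x⟩ + η (2‖ξᵘ‖² + 2‖ξᵇ‖² + G²)`. -/
theorem one_step_descent {d : ℕ}
    (𝒳 : Set (EuclideanSpace ℝ (Fin d))) (hclosed : IsClosed 𝒳) (hconv : Convex ℝ 𝒳)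
    (F : EuclideanSpace ℝ (Fin d) → ℝ)
    (x xstar xplus sg g ξu ξb : EuclideanSpace ℝ (Fin d))
    (G μ η : ℝ)
    (hx : x ∈ 𝒳) (hxstar : xstar ∈ 𝒳) (hxplus : xplus ∈ 𝒳)
    (hμ : 0 ≤ μ) (hη : 0 < η) (hG : ‖sg‖ ≤ G)
    (hsc : F x + ⟪sg, xstar - x⟫ + μ / 2 * ‖xstar - x‖ ^ 2 ≤ F xstar)
    (hproj : ∀ z ∈ 𝒳, (0 : ℝ) ≤ ⟪xplus - (x - η • g), z - xplus⟫)
    (hdecomp : g - sg = ξu + ξb) :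
    F x - F xstar + 1 / (2 * η) * ‖xplus - xstar‖ ^ 2
        - (η⁻¹ - μ) / 2 * ‖x - xstar‖ ^ 2
      ≤ ⟪g - sg, xstar - x⟫ + η * (2 * ‖ξu‖ ^ 2 + 2 * ‖ξb‖ ^ 2 + G ^ 2) :=
  one_step_descent_general 𝒳 F x xstar xplus sg g ξu ξb G μ η hxstar hη hG hsc hproj hdecomp
end
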